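/- Let N_a(x) = (x + a/x)/2 and let x_n(a) be defined by x_0(a) = c > 0 and x_{n+1}(a) = N_a(x_n(a)). Then for each n, a ↦ x_n(a) is differentiable on (0,∞), and the sequence of derivatives x_n'(a) converges pointwise to 1/(2√a) for every a > 0. -/

import Mathlib

/-!
Differentiating the recursion in `a` gives `x'ₙ₊₁ = x'ₙ · (1 - a / xₙ²) / 2 + 1 / (2 xₙ)`.
Since `xₙ₊₁ - √a = (xₙ - √a)² / (2 xₙ)`, from `n = 1` on we have `xₙ ≥ √a`, the error at least
halves at each step, and so `xₙ → √a`. Hence the multiplier `(1 - a / xₙ²) / 2` lies in `[0, 1/2]`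
and tends to `0`, while `1 / (2 xₙ) → 1 / (2√a)`; a linear recursion with such coefficients has
bounded solutions, which therefore converge to the limit of the inhomogeneous term.
-/

open Filter Topology

theorem tendsto_of_eq_mul_add {d l b : ℕ → ℝ} {q β : ℝ} (hq : q < 1)
    (hrec : ∀ n, d (n + 1) = d n * l n + b n) (hlq : ∀ n, |l n| ≤ q)
    (hl : Tendsto l atTop (𝓝 0)) (hb : Tendsto b atTop (𝓝 β)) :
    Tendsto d atTop (𝓝 β) := by
  obtain ⟨B, hB⟩ := isBounded_iff_forall_norm_le.mp (Metric.isBounded_range_of_tendsto b hb)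
  have hbB : ∀ n, |b n| ≤ B := fun n => hB _ ⟨n, rfl⟩
  set M := max |d 0| (B / (1 - q))
  have hBM : B ≤ (1 - q) * M := by
    rw [← div_le_iff₀' (by linarith)]
    exact le_max_right _ _
  have hdM : ∀ n, |d n| ≤ M := by
    intro n
    induction n with
    | zero => exact le_max_left _ _
    | succ n ih =>
      calc |d (n + 1)| ≤ |d n| * |l n| + |b n| := by
            rw [hrec, ← abs_mul]; exact abs_add_le _ _
        _ ≤ M * q + B :=
            add_le_add (mul_le_mul ih (hlq n) (abs_nonneg _) ((abs_nonneg _).trans ih)) (hbB n)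
        _ ≤ M := by linarith
  have hdl : Tendsto (fun n => d n * l n) atTop (𝓝 0) :=
    isBoundedUnder_le_mul_tendsto_zero ⟨M, eventually_map.mpr (.of_forall hdM)⟩ hl
  have hsucc : Tendsto (fun n => d (n + 1)) atTop (𝓝 β) := by
    simpa only [hrec, zero_add] using hdl.add hb
  exact (tendsto_add_atTop_iff_nat 1).mp hsucc

theorem newton_sqrt_sub_sqrt {a x : ℝ} (ha : 0 ≤ a) (hx : x ≠ 0) :
    (x + a / x) / 2 - √a = (x - √a) ^ 2 / (2 * x) := by
  have hs : √a ^ 2 = a := Real.sq_sqrt ha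
  field_simp
  linear_combination -hs

theorem sqrt_le_newton_sqrt {a x : ℝ} (ha : 0 ≤ a) (hx : 0 < x) : √a ≤ (x + a / x) / 2 := by
  rw [← sub_nonneg, newton_sqrt_sub_sqrt ha hx.ne']
  positivity

theorem newton_sqrt_sub_sqrt_le_half {a x : ℝ} (ha : 0 ≤ a) (hx : 0 < x) (h : √a ≤ x) :
    (x + a / x) / 2 - √a ≤ (x - √a) / 2 := by
  rw [newton_sqrt_sub_sqrt ha hx.ne', div_le_div_iff₀ (by positivity) two_pos]
  nlinarith [mul_nonneg (sub_nonneg.mpr h) (Real.sqrt_nonneg a)]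

theorem abs_one_sub_div_sq_div_two_le {a x : ℝ} (ha : 0 ≤ a) (h : √a ≤ x) :
    |(1 - a / x ^ 2) / 2| ≤ 1 / 2 := by
  have hax : a ≤ x ^ 2 := Real.sq_sqrt ha ▸ pow_le_pow_left₀ (Real.sqrt_nonneg a) h 2
  have h1 : a / x ^ 2 ≤ 1 := div_le_one_of_le₀ hax (sq_nonneg x)
  have h0 : 0 ≤ a / x ^ 2 := by positivity
  rw [abs_le]
  constructor <;> linarith

theorem HasDerivAt.newton_sqrt {f : ℝ → ℝ} {f' a : ℝ} (hf : HasDerivAt f f' a) (ha : f a ≠ 0) :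
    HasDerivAt (fun b => (f b + b / f b) / 2) (f' * ((1 - a / f a ^ 2) / 2) + 1 / (2 * f a)) a := by
  refine ((hf.add ((hasDerivAt_id' a).div hf ha)).div_const 2).congr_deriv ?_
  field_simp
  ring

section Iterate

variable {a : ℝ} {x : ℕ → ℝ}

theorem newton_sqrt_iterate_pos (ha : 0 ≤ a) (hx0 : 0 < x 0)
    (hx : ∀ n, x (n + 1) = (x n + a / x n) / 2) (n : ℕ) : 0 < x n := by
  induction n with
  | zero => exact hx0
  | succ n ih => rw [hx]; positivity

theorem tendsto_newton_sqrt_iterate (ha : 0 ≤ a) (hx0 : 0 < x 0)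
    (hx : ∀ n, x (n + 1) = (x n + a / x n) / 2) : Tendsto x atTop (𝓝 √a) := by
  have hpos := newton_sqrt_iterate_pos ha hx0 hx
  have hge (n : ℕ) : √a ≤ x (n + 1) := hx n ▸ sqrt_le_newton_sqrt ha (hpos n)
  have hgeom (n : ℕ) : x (n + 1) - √a ≤ (1 / 2) ^ n * (x 1 - √a) :=
    le_geom (u := fun k => x (k + 1) - √a) (by norm_num) n fun k _ => by
      have := newton_sqrt_sub_sqrt_le_half ha (hpos (k + 1)) (hge k)
      rw [← hx] at this
      linarith
  have herr : Tendsto (fun n => x (n + 1) - √a) atTop (𝓝 0) := by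
    refine squeeze_zero (fun n => sub_nonneg.mpr (hge n)) hgeom ?_
    simpa using (tendsto_pow_atTop_nhds_zero_of_lt_one (by norm_num : (0 : ℝ) ≤ 1 / 2)
      (by norm_num)).mul_const (x 1 - √a)
  refine (tendsto_add_atTop_iff_nat 1).mp ?_
  simpa using herr.add_const √a

end Iterate

section Family

variable {c : ℝ} {X : ℕ → ℝ → ℝ}

theorem HasDerivAt.newton_sqrt_iterate_succ (hXs : ∀ n a, X (n + 1) a = (X n a + a / X n a) / 2)
    {n : ℕ} {a f' : ℝ} (hf : HasDerivAt (X n) f' a) (h : X n a ≠ 0) :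
    HasDerivAt (X (n + 1)) (f' * ((1 - a / X n a ^ 2) / 2) + 1 / (2 * X n a)) a := by
  rw [show X (n + 1) = _ from funext (hXs n)]
  exact hf.newton_sqrt h

theorem differentiableAt_newton_sqrt_iterate (hc : 0 < c) (hX0 : ∀ a, X 0 a = c)
    (hXs : ∀ n a, X (n + 1) a = (X n a + a / X n a) / 2) (n : ℕ) {a : ℝ} (ha : 0 ≤ a) :
    DifferentiableAt ℝ (X n) a := by
  induction n with
  | zero => rw [show X 0 = _ from funext hX0]; exact differentiableAt_const c
  | succ n ih =>
    have hpos := newton_sqrt_iterate_pos ha (x := (X · a)) (hX0 a ▸ hc) (hXs · a) n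
    exact (ih.hasDerivAt.newton_sqrt_iterate_succ hXs hpos.ne').differentiableAt

end Family

theorem stmt_4 (c : ℝ) (hc : 0 < c) (X : ℕ → ℝ → ℝ)
    (hX0 : ∀ a : ℝ, X 0 a = c)
    (hXs : ∀ n : ℕ, ∀ a : ℝ, X (n + 1) a = (X n a + a / X n a) / 2) :
    (∀ n : ℕ, DifferentiableOn ℝ (X n) (Set.Ioi 0)) ∧
      ∀ a : ℝ, 0 < a →
        Filter.Tendsto (fun n => deriv (X n) a) Filter.atTop
          (nhds (1 / (2 * Real.sqrt a))) := by
  have hdiff n {a : ℝ} (ha : 0 ≤ a) := differentiableAt_newton_sqrt_iterate hc hX0 hXs n ha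
  refine ⟨fun n a ha => (hdiff n (le_of_lt ha)).differentiableWithinAt, fun a ha => ?_⟩
  have hpos := newton_sqrt_iterate_pos ha.le (x := (X · a)) (hX0 a ▸ hc) (hXs · a)
  have hsqrt_le n : √a ≤ X (n + 1) a := hXs n a ▸ sqrt_le_newton_sqrt ha.le (hpos n)
  have hlim : Tendsto (fun n => X (n + 1) a) atTop (𝓝 √a) := (tendsto_add_atTop_iff_nat 1).mpr
    (tendsto_newton_sqrt_iterate ha.le (x := (X · a)) (hX0 a ▸ hc) (hXs · a))
  have hslope : Tendsto (fun n => (1 - a / X (n + 1) a ^ 2) / 2) atTop (𝓝 0) := by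
    have h : Tendsto (fun n => (1 - a / X (n + 1) a ^ 2) / 2) atTop (𝓝 ((1 - a / √a ^ 2) / 2)) :=
      ((tendsto_const_nhds.div (hlim.pow 2) (by positivity)).const_sub 1).div_const 2
    rwa [Real.sq_sqrt ha.le, div_self ha.ne', sub_self, zero_div] at h
  refine (tendsto_add_atTop_iff_nat 1).mp (tendsto_of_eq_mul_add (by norm_num : (1 : ℝ) / 2 < 1)
    (fun n => ((hdiff (n + 1) ha.le).hasDerivAt.newton_sqrt_iterate_succ hXs (hpos _).ne').deriv)
    (fun n => abs_one_sub_div_sq_div_two_le ha.le (hsqrt_le n)) hslope ?_)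
  exact tendsto_const_nhds.div (hlim.const_mul 2) (by positivity)
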